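/- Let N be a tree-child time consistent hybridization network on taxa S and let i be a leaf. The leaf i is a tree node whose parent has no other child (so the reduction U(i) can be applied) if, and only if, ℓ_N(i,j) ≥ 2 for every leaf j ∈ S \ {i}, where ℓ_N(i,j) is the distance from the least common semi-strict ancestor [i,j] to i. -/

import Mathlib

/-!
If `i` is a tree node whose parent `u` has no other child, then for a leaf `j ≠ i` the node
`[i,j]` is neither `i` (a leaf has no other descendant) nor a parent of `i` (the only one is `u`,
whose descendants are `u` and `i`), so `ℓ(i,j) ≥ 2`.

Conversely, let `u` be a parent of `i` of minimal height. If `u` has a child other than `i`, or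
`i` is a hybrid node, there is a leaf `j ≠ i` such that `u` is a common ancestor of `i` and `j`
and a strict ancestor of one of them: in the first case a leaf below a sibling of `i` (and `u`
is a strict ancestor of the tree node `i`); in the second, by the tree-child condition, a leaf
reached from `u` through tree nodes only. Then `[i,j]` is no higher than `u`. But if
`ℓ(i,j) ≥ 2`, a shortest path from `[i,j]` to `i` ends with an arc from a parent of `i` strictly
below `[i,j]`, hence strictly lower than `u`.
-/

open Classical

/-- A walk (path) in a digraph: a nonempty list of vertices with consecutive arcs. -/
def IsWalk {V : Type} (E : V → V → Prop) (p : List V) : Prop := p ≠ [] ∧ p.Chain' E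

/-- A path with origin `u` and end `v`. -/
def WalkFromTo {V : Type} (E : V → V → Prop) (u v : V) (p : List V) : Prop :=
  IsWalk E p ∧ p.head? = some u ∧ p.getLast? = some v

/-- `v` is a descendant of `u` (possibly trivial path from `u` to `v`). -/
def Desc {V : Type} (E : V → V → Prop) (u v : V) : Prop := Relation.ReflTransGen E u v

/-- A root: a node with no incoming arcs. -/
def IsRootNode {V : Type} (E : V → V → Prop) (r : V) : Prop := ∀ u, ¬ E u r

/-- `u` is a strict ancestor of `v`: `v` is a descendant of `u` and every path
from a root to `v` contains `u`. -/
def StrictAnc {V : Type} (E : V → V → Prop) (u v : V) : Prop :=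
  Desc E u v ∧ ∀ (r : V) (p : List V), IsRootNode E r → WalkFromTo E r v p → u ∈ p

/-- In-degree. -/
noncomputable def indeg {V : Type} (E : V → V → Prop) (v : V) : ℕ := {u | E u v}.ncard
/-- Out-degree. -/
noncomputable def outdeg {V : Type} (E : V → V → Prop) (v : V) : ℕ := {w | E v w}.ncard

/-- Tree node: in-degree at most 1. -/
def IsTreeNode {V : Type} (E : V → V → Prop) (v : V) : Prop := indeg E v ≤ 1
/-- Hybrid node: in-degree at least 2. -/
def IsHybrid {V : Type} (E : V → V → Prop) (v : V) : Prop := 2 ≤ indeg E v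
/-- Leaf: no outgoing arcs. -/
def IsLeaf {V : Type} (E : V → V → Prop) (v : V) : Prop := ∀ w, ¬ E v w

/-- Acyclicity: no non-trivial path from a node to itself. -/
def Acyclic {V : Type} (E : V → V → Prop) : Prop := ∀ v, ¬ Relation.TransGen E v v

/-- A hybridization network: a rooted DAG whose single root has out-degree > 1. -/
structure IsHybNet {V : Type} (E : V → V → Prop) (r : V) : Prop where
  acyclic : Acyclic E
  isRoot : IsRootNode E r
  uniqueRoot : ∀ x, IsRootNode E x → x = r
  rootOut : 2 ≤ outdeg E r

/-- Tree-child condition: every internal node has a tree-node child. -/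
def TreeChild {V : Type} (E : V → V → Prop) : Prop :=
  ∀ v, ¬ IsLeaf E v → ∃ w, E v w ∧ IsTreeNode E w

/-- Time consistency: a temporal representation exists. -/
def TimeConsistent {V : Type} (E : V → V → Prop) : Prop :=
  ∃ τ : V → ℕ, ∀ u v, E u v → (IsTreeNode E v → τ u < τ v) ∧ (IsHybrid E v → τ u = τ v)

/-- The leaves are bijectively labeled by `S` via `leaf`. -/
def LabelsLeaves {V S : Type} (E : V → V → Prop) (leaf : S → V) : Prop :=
  Function.Injective leaf ∧ (∀ s, IsLeaf E (leaf s)) ∧ ∀ v, IsLeaf E v → ∃ s, leaf s = v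

/-- Distance: length of a shortest path from `u` to `v`. -/
noncomputable def dist {V : Type} (E : V → V → Prop) (u v : V) : ℕ :=
  sInf {n | ∃ p, WalkFromTo E u v p ∧ p.length = n + 1}

/-- Height: largest length of a path from `v` to a leaf. -/
noncomputable def height {V : Type} (E : V → V → Prop) (v : V) : ℕ :=
  sSup {n | ∃ p w, WalkFromTo E v w p ∧ IsLeaf E w ∧ p.length = n + 1}

/-- Common ancestors of `u` and `v` that are strict ancestors of at least one of them. -/
def CSAset {V : Type} (E : V → V → Prop) (u v : V) : Set V :=
  {x | Desc E x u ∧ Desc E x v ∧ (StrictAnc E x u ∨ StrictAnc E x v)}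

/-- `x` is a least common semi-strict ancestor of `u` and `v`. -/
def IsLCSA {V : Type} (E : V → V → Prop) (u v x : V) : Prop :=
  x ∈ CSAset E u v ∧ ∀ y ∈ CSAset E u v, height E x ≤ height E y

/-- The least common semi-strict ancestor `[u,v]` (the root `r` witnesses nonemptiness). -/
noncomputable def lcsa {V : Type} (E : V → V → Prop) (r u v : V) : V :=
  @Classical.epsilon V ⟨r⟩ (IsLCSA E u v)

/-- `ℓ_N(u,v)`: the distance from `[u,v]` to `u`. -/
noncomputable def ell {V : Type} (E : V → V → Prop) (r u v : V) : ℕ :=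
  dist E (lcsa E r u v) u

/-- `L_N(u,v) = ℓ_N(u,v) + ℓ_N(v,u)`: the LCSA-path length between `u` and `v`. -/
noncomputable def pathLen {V : Type} (E : V → V → Prop) (r u v : V) : ℕ :=
  ell E r u v + ell E r v u

/-- `h_N(u,v)`: −1 if `[u,v]` is a strict ancestor of `u` only, 1 if of `v` only, 0 if of both. -/
noncomputable def hval {V : Type} (E : V → V → Prop) (r u v : V) : ℤ :=
  if StrictAnc E (lcsa E r u v) u then
    (if StrictAnc E (lcsa E r u v) v then 0 else -1)
  else 1

/-- Siblings: distinct nodes sharing a parent. -/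
def Sibling {V : Type} (E : V → V → Prop) (u v : V) : Prop :=
  u ≠ v ∧ ∃ p, E p u ∧ E p v

/-- A tree path: a non-trivial path whose end and intermediate nodes are tree nodes. -/
def TreePath {V : Type} (E : V → V → Prop) (p : List V) (u v : V) : Prop :=
  WalkFromTo E u v p ∧ 2 ≤ p.length ∧ ∀ w ∈ p.tail, IsTreeNode E w

/-- `v` is a tree descendant of `u`. -/
def TreeDesc {V : Type} (E : V → V → Prop) (u v : V) : Prop := ∃ p, TreePath E p u v

/-- Quasi-binary hybridization network. -/
def QuasiBinary {V : Type} (E : V → V → Prop) : Prop :=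
  ∀ v : V, (indeg E v, outdeg E v) ∈ ({(0,2),(1,0),(1,2),(2,0),(2,1),(2,2)} : Set (ℕ × ℕ))

/-- Fully resolved hybridization network node types. -/
def FullyResolvedHyb {V : Type} (E : V → V → Prop) : Prop :=
  ∀ v : V, (indeg E v, outdeg E v) ∈ ({(0,2),(1,0),(1,2),(2,0),(2,2)} : Set (ℕ × ℕ))

/-- Fully resolved phylogenetic network node types. -/
def FullyResolvedPhylo {V : Type} (E : V → V → Prop) : Prop :=
  ∀ v : V, (indeg E v, outdeg E v) ∈ ({(0,2),(1,0),(1,2),(2,1)} : Set (ℕ × ℕ))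

/-- Phylogenetic network condition: every hybrid node has exactly one child, a tree node. -/
def PhyloNet {V : Type} (E : V → V → Prop) : Prop :=
  ∀ v, IsHybrid E v → ∃ w, E v w ∧ IsTreeNode E w ∧ ∀ x, E v x → x = w

open Relation

section Digraphs

variable {V : Type} {E : V → V → Prop} {u v w : V} {p : List V}

lemma walkFromTo_singleton (v : V) : WalkFromTo E v v [v] :=
  ⟨⟨List.cons_ne_nil _ _, List.isChain_singleton v⟩, rfl, rfl⟩

lemma WalkFromTo.length_pos (hp : WalkFromTo E u v p) : 0 < p.length :=
  List.length_pos_iff.mpr hp.1.1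

lemma WalkFromTo.cons (huv : E u v) (hp : WalkFromTo E v w p) : WalkFromTo E u w (u :: p) := by
  obtain ⟨⟨-, hch⟩, hh, hl⟩ := hp
  obtain ⟨l, rfl⟩ : ∃ l, p = v :: l := ⟨_, List.eq_cons_of_mem_head? hh⟩
  exact ⟨⟨List.cons_ne_nil _ _, hch.cons_cons huv⟩, rfl, by rwa [List.getLast?_cons_cons]⟩

lemma exists_walkFromTo_of_desc (h : Desc E u v) : ∃ p, WalkFromTo E u v p := by
  obtain ⟨l, hch, hl⟩ := List.exists_isChain_cons_of_relationReflTransGen h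
  refine ⟨u :: l, ⟨List.cons_ne_nil _ _, hch⟩, rfl, ?_⟩
  rw [List.getLast?_eq_some_getLast (List.cons_ne_nil _ _), hl]

lemma WalkFromTo.exists_adj_of_mem (hp : WalkFromTo E u w p) (hv : v ∈ p) (huv : u ≠ v) :
    ∃ c ∈ p, E c v := by
  obtain ⟨s, t, rfl⟩ := List.append_of_mem hv
  obtain ⟨⟨-, hch⟩, hh, -⟩ := hp
  have hs : s ≠ [] := by
    rintro rfl
    exact huv (by simpa using hh : v = u).symm
  refine ⟨s.getLast hs, List.mem_append_left _ (List.getLast_mem hs), ?_⟩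
  exact (List.isChain_append.mp hch).2.2 _ (List.getLast?_eq_some_getLast hs) _ rfl

lemma Acyclic.nodup_of_isChain (hac : Acyclic E) (hp : p.IsChain E) : p.Nodup := by
  have : Std.Irrefl (TransGen E) := ⟨hac⟩
  exact (hp.imp fun _ _ => TransGen.single).pairwise.nodup

lemma WalkFromTo.length_le_natCard [Finite V] (hac : Acyclic E) (hp : WalkFromTo E u v p) :
    p.length ≤ Nat.card V :=
  (hac.nodup_of_isChain hp.1.2).length_le_natCard

lemma Acyclic.wellFounded [Finite V] (hac : Acyclic E) : WellFounded E := by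
  have : Std.Irrefl (TransGen E) := ⟨hac⟩
  exact Subrelation.wf TransGen.single (Finite.wellFounded_of_trans_of_irrefl _)

lemma Acyclic.swap (hac : Acyclic E) : Acyclic (Function.swap E) :=
  fun v h => hac v (transGen_swap.mp h)

lemma desc_eq_of_isLeaf (hv : IsLeaf E v) (h : Desc E v w) : w = v := by
  rcases h.cases_head with rfl | ⟨c, hc, -⟩
  · rfl
  · exact absurd hc (hv c)

lemma exists_isLeaf_desc [Finite V] (hac : Acyclic E) (v : V) : ∃ j, IsLeaf E j ∧ Desc E v j := by
  induction v using hac.swap.wellFounded.induction with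
  | _ v ih =>
    by_cases hv : IsLeaf E v
    · exact ⟨v, hv, .refl⟩
    · obtain ⟨w, hw⟩ : ∃ w, E v w := by simpa [IsLeaf] using hv
      obtain ⟨j, hj, hwj⟩ := ih w hw
      exact ⟨j, hj, hwj.head hw⟩

end Digraphs

section Distance

variable {V : Type} {E : V → V → Prop} {u v : V} {p : List V}

lemma dist_add_one_le_length (hp : WalkFromTo E u v p) : dist E u v + 1 ≤ p.length := by
  have := hp.length_pos
  have : dist E u v ≤ p.length - 1 := Nat.sInf_le ⟨p, hp, by omega⟩
  omega

lemma exists_walkFromTo_length_dist (h : Desc E u v) :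
    ∃ p, WalkFromTo E u v p ∧ p.length = dist E u v + 1 := by
  obtain ⟨p, hp⟩ := exists_walkFromTo_of_desc h
  have := hp.length_pos
  have hne : {n | ∃ p, WalkFromTo E u v p ∧ p.length = n + 1}.Nonempty :=
    ⟨p.length - 1, p, hp, by omega⟩
  exact Nat.sInf_mem hne

lemma dist_le_one_iff (h : Desc E u v) : dist E u v ≤ 1 ↔ u = v ∨ E u v := by
  constructor
  · intro hd
    obtain ⟨p, ⟨⟨-, hch⟩, hh, hl⟩, hlen⟩ := exists_walkFromTo_length_dist h
    rcases p with _ | ⟨a, _ | ⟨b, _ | ⟨c, t⟩⟩⟩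
    · simp at hlen
    · simp only [List.head?_cons, List.getLast?_singleton, Option.some.injEq] at hh hl
      exact .inl (hh ▸ hl)
    · simp only [List.head?_cons, List.getLast?_cons_cons, List.getLast?_singleton,
        Option.some.injEq] at hh hl
      exact .inr (hh ▸ hl ▸ (List.isChain_pair.mp hch))
    · simp only [List.length_cons] at hlen
      omega
  · rintro (rfl | huv)
    · have := dist_add_one_le_length (walkFromTo_singleton (E := E) u)
      simp only [List.length_cons, List.length_nil] at this
      omega
    · have := dist_add_one_le_length ((walkFromTo_singleton v).cons huv)
      simp only [List.length_cons, List.length_nil] at this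
      omega

end Distance

section Height

variable {V : Type} [Finite V] {E : V → V → Prop} {u v w : V} {p : List V}

lemma bddAbove_height_set (hac : Acyclic E) (v : V) :
    BddAbove {n | ∃ p w, WalkFromTo E v w p ∧ IsLeaf E w ∧ p.length = n + 1} :=
  ⟨Nat.card V, by
    rintro n ⟨p, w, hp, -, hlen⟩
    have := hp.length_le_natCard hac
    omega⟩

lemma length_le_height_add_one (hac : Acyclic E) (hp : WalkFromTo E v w p) (hw : IsLeaf E w) :
    p.length ≤ height E v + 1 := by
  have := hp.length_pos
  have : p.length - 1 ≤ height E v := le_csSup (bddAbove_height_set hac v) ⟨p, w, hp, hw, by omega⟩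
  omega

lemma exists_walkFromTo_length_height (hac : Acyclic E) (v : V) :
    ∃ p w, WalkFromTo E v w p ∧ IsLeaf E w ∧ p.length = height E v + 1 := by
  obtain ⟨j, hj, hvj⟩ := exists_isLeaf_desc hac v
  obtain ⟨p, hp⟩ := exists_walkFromTo_of_desc hvj
  have := hp.length_pos
  have hne : {n | ∃ p w, WalkFromTo E v w p ∧ IsLeaf E w ∧ p.length = n + 1}.Nonempty :=
    ⟨p.length - 1, p, j, hp, hj, by omega⟩
  exact Nat.sSup_mem hne (bddAbove_height_set hac v)

lemma height_lt_of_adj (hac : Acyclic E) (huv : E u v) : height E v < height E u := by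
  obtain ⟨p, w, hp, hw, hlen⟩ := exists_walkFromTo_length_height hac v
  have := length_le_height_add_one hac (hp.cons huv) hw
  simp only [List.length_cons] at this
  omega

lemma height_lt_of_transGen (hac : Acyclic E) (h : TransGen E u v) : height E v < height E u := by
  induction h with
  | single huv => exact height_lt_of_adj hac huv
  | tail _ hbc ih => exact (height_lt_of_adj hac hbc).trans ih

end Height

section Network

variable {V : Type} {E : V → V → Prop} {r u v w i j : V}

lemma strictAnc_self (v : V) : StrictAnc E v v :=
  ⟨.refl, fun _ _ _ hp => List.mem_of_mem_getLast? hp.2.2⟩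

lemma IsHybNet.exists_adj_of_ne (hnet : IsHybNet E r) (hv : v ≠ r) : ∃ u, E u v := by
  by_contra! h
  exact hv (hnet.uniqueRoot v h)

lemma IsHybNet.exists_adj_of_isLeaf (hnet : IsHybNet E r) (hi : IsLeaf E i) : ∃ u, E u i := by
  refine hnet.exists_adj_of_ne ?_
  rintro rfl
  have hout := hnet.rootOut
  rw [outdeg, Set.eq_empty_of_forall_notMem (s := {w | E i w}) hi, Set.ncard_empty] at hout
  omega

variable [Finite V]

lemma IsTreeNode.eq_of_adj (hv : IsTreeNode E v) (hu : E u v) (hw : E w v) : u = w :=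
  (Set.ncard_le_one (Set.toFinite _)).mp hv u hu w hw

lemma StrictAnc.of_adj_isTreeNode (huv : E u v) (hv : IsTreeNode E v) (h : StrictAnc E v j) :
    StrictAnc E u j := by
  refine ⟨h.1.head huv, fun r' p hr' hp => ?_⟩
  obtain ⟨c, hc, hcv⟩ := hp.exists_adj_of_mem (h.2 r' p hr' hp) (by rintro rfl; exact hr' u huv)
  exact hv.eq_of_adj hcv huv ▸ hc

lemma IsTreeNode.exists_isLeaf_strictAnc (hac : Acyclic E) (htc : TreeChild E)
    (hv : IsTreeNode E v) : ∃ j, IsLeaf E j ∧ IsTreeNode E j ∧ StrictAnc E v j := by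
  induction v using hac.swap.wellFounded.induction with
  | _ v ih =>
    by_cases hleaf : IsLeaf E v
    · exact ⟨v, hleaf, hv, strictAnc_self v⟩
    · obtain ⟨w, hvw, hw⟩ := htc v hleaf
      obtain ⟨j, hj, hjt, hwj⟩ := ih w hvw hw
      exact ⟨j, hj, hjt, hwj.of_adj_isTreeNode hvw hw⟩

lemma IsHybNet.desc_root (hnet : IsHybNet E r) (v : V) : Desc E r v := by
  induction v using hnet.acyclic.wellFounded.induction with
  | _ v ih =>
    by_cases hv : v = r
    · exact hv ▸ .refl
    · obtain ⟨u, hu⟩ := hnet.exists_adj_of_ne hv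
      exact (ih u hu).tail hu

lemma IsHybNet.strictAnc_root (hnet : IsHybNet E r) (v : V) : StrictAnc E r v :=
  ⟨hnet.desc_root v, fun _ _ hr' hp => hnet.uniqueRoot _ hr' ▸ List.mem_of_mem_head? hp.2.1⟩

lemma IsHybNet.isLCSA_lcsa (hnet : IsHybNet E r) (u v : V) : IsLCSA E u v (lcsa E r u v) := by
  have hr : r ∈ CSAset E u v :=
    ⟨hnet.desc_root u, hnet.desc_root v, .inl (hnet.strictAnc_root u)⟩
  obtain ⟨x, hx, hmin⟩ := Set.exists_min_image _ (height E) (Set.toFinite _) ⟨r, hr⟩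
  exact Classical.epsilon_spec (p := IsLCSA E u v) ⟨x, hx, hmin⟩

lemma IsHybNet.two_le_ell_of_forall_adj_eq (hnet : IsHybNet E r) (hi : IsLeaf E i) (hit : IsTreeNode E i)
    (hui : E u i) (huniq : ∀ w, E u w → w = i) (hj : IsLeaf E j) (hji : j ≠ i) :
    2 ≤ ell E r i j := by
  obtain ⟨⟨hxi, hxj, -⟩, -⟩ := hnet.isLCSA_lcsa i j
  by_contra! hlt
  rcases (dist_le_one_iff hxi).mp (by unfold ell at hlt; omega) with hx | hx
  · exact hji (desc_eq_of_isLeaf hi (hx ▸ hxj))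
  · rw [hit.eq_of_adj hx hui] at hxj
    rcases hxj.cases_head with rfl | ⟨c, huc, hcj⟩
    · exact hj i hui
    · exact hji (desc_eq_of_isLeaf hi (huniq c huc ▸ hcj))

lemma exists_isLeaf_ne_mem_CSAset (hac : Acyclic E) (htc : TreeChild E) (hui : E u i)
    (hsib : IsTreeNode E i → ∃ w, E u w ∧ w ≠ i) : ∃ j, IsLeaf E j ∧ j ≠ i ∧ u ∈ CSAset E i j := by
  by_cases hit : IsTreeNode E i
  · obtain ⟨w, huw, hwi⟩ := hsib hit
    obtain ⟨j, hj, hwj⟩ := exists_isLeaf_desc hac w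
    refine ⟨j, hj, ?_, .single hui, hwj.head huw,
      .inl ((strictAnc_self i).of_adj_isTreeNode hui hit)⟩
    rintro rfl
    -- the last arc of a path from `w` to `i` leaves `u`, closing a cycle through `w`
    rcases hwj.cases_tail with hjw | ⟨c, hwc, hcj⟩
    · exact hwi hjw.symm
    · exact hac u (.head' huw (hit.eq_of_adj hcj hui ▸ hwc))
  · obtain ⟨t, hut, htt⟩ := htc u fun h => h i hui
    obtain ⟨j, hj, hjt, htj⟩ := htt.exists_isLeaf_strictAnc hac htc
    have huj := htj.of_adj_isTreeNode hut htt
    exact ⟨j, hj, fun h => hit (h ▸ hjt), .single hui, huj.1, .inr huj⟩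

lemma IsHybNet.exists_adj_height_lt_of_two_le_ell (hnet : IsHybNet E r) (h : 2 ≤ ell E r i j) :
    ∃ c, E c i ∧ height E c < height E (lcsa E r i j) := by
  obtain ⟨⟨hxi, -, -⟩, -⟩ := hnet.isLCSA_lcsa i j
  unfold ell at h
  set x := lcsa E r i j
  obtain ⟨hne, hnadj⟩ : x ≠ i ∧ ¬E x i := by
    rw [← not_or, ← dist_le_one_iff hxi]
    omega
  obtain ⟨c, hxc, hci⟩ := hxi.cases_tail.resolve_left (Ne.symm hne)
  rcases reflTransGen_iff_eq_or_transGen.mp hxc with hcx | hxc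
  · exact absurd (hcx ▸ hci) hnadj
  · exact ⟨c, hci, height_lt_of_transGen hnet.acyclic hxc⟩

end Network

theorem stmt13_general {V : Type} [Fintype V] (E : V → V → Prop) (r : V)
    (hnet : IsHybNet E r) (htc : TreeChild E)
    (i : V) (hi : IsLeaf E i) :
    (IsTreeNode E i ∧ ∃ u, E u i ∧ ∀ w, E u w → w = i) ↔
      ∀ j, IsLeaf E j → j ≠ i → 2 ≤ ell E r i j := by
  constructor
  · rintro ⟨hit, u, hui, huniq⟩ j hj hji
    exact hnet.two_le_ell_of_forall_adj_eq hi hit hui huniq hj hji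
  · intro hell
    obtain ⟨u, hui, hmin⟩ := Set.exists_min_image {q | E q i} (height E) (Set.toFinite _)
      (hnet.exists_adj_of_isLeaf hi)
    by_contra! hsib
    obtain ⟨j, hj, hji, hu⟩ :=
      exists_isLeaf_ne_mem_CSAset hnet.acyclic htc hui fun hit => hsib hit u hui
    obtain ⟨c, hci, hc⟩ := hnet.exists_adj_height_lt_of_two_le_ell (hell j hj hji)
    have hlcsa_le_u := (hnet.isLCSA_lcsa i j).2 u hu
    have hu_le_c := hmin c hci
    omega

/-- In a TCTC hybridization network, a leaf `i` is a tree node whose parent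
has no other child iff `ℓ_N(i,j) ≥ 2` for every other leaf `j`. -/
theorem stmt13 {V : Type} [Fintype V] (E : V → V → Prop) (r : V)
    (hnet : IsHybNet E r) (htc : TreeChild E) (hti : TimeConsistent E)
    (i : V) (hi : IsLeaf E i) :
    (IsTreeNode E i ∧ ∃ u, E u i ∧ ∀ w, E u w → w = i) ↔
      ∀ j, IsLeaf E j → j ≠ i → 2 ≤ ell E r i j :=
  stmt13_general E r hnet htc i hi
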